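/- Let L > 0 and ℓ = L/2. Let z : [0,L] → ℝ be continuous and x, y, a, b : [0,L] → ℝ differentiable with x' = −xz, y' = yz, a' = 2x + az, b' = 2y − bz on [0,L] and a(0) = b(0) = 0. Assume the half-period symmetry x(t + ℓ) = y(t) for all t ∈ [0,ℓ], that ∫₀^ℓ x(t)² dt = ∫₀^ℓ y(t)² dt, and that y(ℓ) ≠ 0. Then a(L) = 2·b(ℓ). -/

import Mathlib

/-!
Along the flow the products `a x` and `b y` are integrating factors: the `z`-terms cancel, so
`(a x)' = 2 x²` and `(b y)' = 2 y²`. Hence `a(L) x(L) = 2 ∫₀^L x²` and `b(ℓ) y(ℓ) = 2 ∫₀^ℓ y²`.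
The symmetry gives `x(L) = y(ℓ)` and turns the second half of `∫₀^L x²` into `∫₀^ℓ y²`, so with
`∫₀^ℓ x² = ∫₀^ℓ y²` both sides equal `4 ∫₀^ℓ y²` up to the nonzero factor `y(ℓ)`.
-/

open Set intervalIntegral

theorem integral_eq_sub_of_hasDerivWithinAt_Icc {α β : ℝ} (hαβ : α ≤ β) {f f' : ℝ → ℝ}
    (hf : ∀ t ∈ Icc α β, HasDerivWithinAt f (f' t) (Icc α β) t)
    (hf' : ContinuousOn f' (Icc α β)) :
    ∫ t in α..β, f' t = f β - f α :=
  integral_eq_sub_of_hasDeriv_right_of_le hαβ (fun t ht => (hf t ht).continuousWithinAt)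
    (fun t ht => ((hf t (Ioo_subset_Icc_self ht)).hasDerivAt
      (Icc_mem_nhds ht.1 ht.2)).hasDerivWithinAt)
    (hf'.intervalIntegrable_of_Icc hαβ)

theorem HasDerivWithinAt.mul_of_opposite_rates {u v : ℝ → ℝ} {p c t : ℝ} {s : Set ℝ}
    (hu : HasDerivWithinAt u (p + u t * c) s t) (hv : HasDerivWithinAt v (-(v t * c)) s t) :
    HasDerivWithinAt (fun t => u t * v t) (p * v t) s t :=
  (hu.mul hv).congr_deriv (by ring)

theorem mul_eq_two_mul_integral_sq {M : ℝ} (hM : 0 ≤ M) {u v w : ℝ → ℝ}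
    (hu : ∀ t ∈ Icc 0 M, HasDerivWithinAt u (2 * v t + u t * w t) (Icc 0 M) t)
    (hv : ∀ t ∈ Icc 0 M, HasDerivWithinAt v (-(v t * w t)) (Icc 0 M) t) (hu0 : u 0 = 0) :
    u M * v M = 2 * ∫ t in (0:ℝ)..M, v t ^ 2 := by
  have hvc : ContinuousOn v (Icc 0 M) := fun t ht => (hv t ht).continuousWithinAt
  have hFTC := integral_eq_sub_of_hasDerivWithinAt_Icc hM
    (fun t ht => (hu t ht).mul_of_opposite_rates (hv t ht))
    ((continuousOn_const.mul hvc).mul hvc)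
  rw [hu0, zero_mul, sub_zero] at hFTC
  rw [← hFTC, ← integral_const_mul]
  simp only [sq, mul_assoc]

theorem integral_eq_add_integral_comp_add_half {f : ℝ → ℝ} {L : ℝ}
    (hf : IntervalIntegrable f MeasureTheory.volume 0 L) :
    ∫ t in (0:ℝ)..L, f t =
      (∫ t in (0:ℝ)..(L / 2), f t) + ∫ t in (0:ℝ)..(L / 2), f (t + L / 2) := by
  have hmid : L / 2 ∈ uIcc 0 L :=
    mem_uIcc.2 ((le_total 0 L).imp (fun _ => ⟨by linarith, by linarith⟩)
      (fun _ => ⟨by linarith, by linarith⟩))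
  have h₁ := hf.mono_set (uIcc_subset_uIcc left_mem_uIcc hmid)
  have h₂ := hf.mono_set (uIcc_subset_uIcc hmid right_mem_uIcc)
  rw [integral_comp_add_right, zero_add, add_halves, integral_add_adjacent_intervals h₁ h₂]

theorem a_full_period_eq_twice_b_half_period_general
    (L : ℝ) (hL : 0 < L) (x y z a b : ℝ → ℝ)
    (hx : ∀ t ∈ Set.Icc (0:ℝ) L, HasDerivWithinAt x (-(x t * z t)) (Set.Icc 0 L) t)
    (hy : ∀ t ∈ Set.Icc (0:ℝ) L, HasDerivWithinAt y (y t * z t) (Set.Icc 0 L) t)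
    (ha : ∀ t ∈ Set.Icc (0:ℝ) L, HasDerivWithinAt a (2 * x t + a t * z t) (Set.Icc 0 L) t)
    (hb : ∀ t ∈ Set.Icc (0:ℝ) L, HasDerivWithinAt b (2 * y t - b t * z t) (Set.Icc 0 L) t)
    (ha0 : a 0 = 0) (hb0 : b 0 = 0)
    (hsym : ∀ t ∈ Set.Icc (0:ℝ) (L / 2), x (t + L / 2) = y t)
    (hint : (∫ t in (0:ℝ)..(L / 2), x t ^ 2) = ∫ t in (0:ℝ)..(L / 2), y t ^ 2)
    (hyl : y (L / 2) ≠ 0) :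
    a L = 2 * b (L / 2) := by
  have hhalf : Icc (0:ℝ) (L / 2) ⊆ Icc 0 L := Icc_subset_Icc le_rfl (by linarith)
  have hax := mul_eq_two_mul_integral_sq hL.le ha hx ha0
  have hby : b (L / 2) * y (L / 2) = 2 * ∫ t in (0:ℝ)..(L / 2), y t ^ 2 :=
    mul_eq_two_mul_integral_sq (by positivity) (w := fun t => -z t)
      (fun t ht => ((hb t (hhalf ht)).mono hhalf).congr_deriv (by ring))
      (fun t ht => ((hy t (hhalf ht)).mono hhalf).congr_deriv (by ring)) hb0
  have hxL : x L = y (L / 2) := by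
    simpa only [add_halves] using hsym (L / 2) ⟨by positivity, le_rfl⟩
  have hx2 : IntervalIntegrable (fun t => x t ^ 2) MeasureTheory.volume 0 L :=
    ContinuousOn.intervalIntegrable_of_Icc hL.le
      (ContinuousOn.pow (fun t ht => (hx t ht).continuousWithinAt) 2)
  have hsecond : ∫ t in (0:ℝ)..(L / 2), x (t + L / 2) ^ 2 = ∫ t in (0:ℝ)..(L / 2), y t ^ 2 :=
    integral_congr fun t ht => by
      rw [uIcc_of_le (by positivity)] at ht
      simp only [hsym t ht]
  rw [integral_eq_add_integral_comp_add_half hx2, hsecond, hint, hxL] at hax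
  exact mul_right_cancel₀ hyl (by linear_combination hax - 2 * hby)

theorem a_full_period_eq_twice_b_half_period
    (L : ℝ) (hL : 0 < L) (x y z a b : ℝ → ℝ)
    (hzc : ContinuousOn z (Set.Icc 0 L))
    (hx : ∀ t ∈ Set.Icc (0:ℝ) L, HasDerivWithinAt x (-(x t * z t)) (Set.Icc 0 L) t)
    (hy : ∀ t ∈ Set.Icc (0:ℝ) L, HasDerivWithinAt y (y t * z t) (Set.Icc 0 L) t)
    (ha : ∀ t ∈ Set.Icc (0:ℝ) L, HasDerivWithinAt a (2 * x t + a t * z t) (Set.Icc 0 L) t)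
    (hb : ∀ t ∈ Set.Icc (0:ℝ) L, HasDerivWithinAt b (2 * y t - b t * z t) (Set.Icc 0 L) t)
    (ha0 : a 0 = 0) (hb0 : b 0 = 0)
    (hsym : ∀ t ∈ Set.Icc (0:ℝ) (L / 2), x (t + L / 2) = y t)
    (hint : (∫ t in (0:ℝ)..(L / 2), x t ^ 2) = ∫ t in (0:ℝ)..(L / 2), y t ^ 2)
    (hyl : y (L / 2) ≠ 0) :
    a L = 2 * b (L / 2) :=
  a_full_period_eq_twice_b_half_period_general L hL x y z a b hx hy ha hb ha0 hb0 hsym hint hyl
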